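/- arXiv:1806.07332 — 3 statements merged into one kernel-verified Lean document; each statement's English description precedes it below -/
import Mathlib

section
/- If $\Phi$ and $\Theta$ are detection-incoherent quantum channels, then their tensor product $\Phi\otimes\Theta$ is detection-incoherent, where the dephasing on a composite system is the tensor product of the dephasings on the factors. -/
open Matrix
open scoped ComplexOrder

noncomputable def deph {ι : Type} [Fintype ι] [DecidableEq ι] :
    Matrix ι ι ℂ →ₗ[ℂ] Matrix ι ι ℂ where
  toFun ρ := Matrix.diagonal fun i => ρ i i
  map_add' ρ σ := by
    ext i j
    by_cases h : i = j <;> simp [Matrix.diagonal_apply, h]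
  map_smul' c ρ := by
    ext i j
    by_cases h : i = j <;> simp [Matrix.diagonal_apply, h]

def IsKrausChannel {ι κ : Type} [Fintype ι] [DecidableEq ι] [Fintype κ] [DecidableEq κ]
    (Φ : Matrix ι ι ℂ →ₗ[ℂ] Matrix κ κ ℂ) : Prop :=
  ∃ (N : ℕ) (K : Fin N → Matrix κ ι ℂ),
    (∀ ρ, Φ ρ = ∑ n, K n * ρ * (K n)ᴴ) ∧ (∑ n, (K n)ᴴ * K n = 1)

/-- Detection-incoherent: `Δ ∘ Φ = Δ ∘ Φ ∘ Δ`. -/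
def IsDI {ι κ : Type} [Fintype ι] [DecidableEq ι] [Fintype κ] [DecidableEq κ]
    (Φ : Matrix ι ι ℂ →ₗ[ℂ] Matrix κ κ ℂ) : Prop :=
  LinearMap.comp deph Φ = LinearMap.comp deph (LinearMap.comp Φ deph)

/-- Tensor product of linear maps on matrix spaces (Kronecker form). -/
noncomputable def tensorLinMap {ι₁ ι₂ κ₁ κ₂ : Type}
    [Fintype ι₁] [DecidableEq ι₁] [Fintype ι₂] [DecidableEq ι₂]
    [Fintype κ₁] [DecidableEq κ₁] [Fintype κ₂] [DecidableEq κ₂]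
    (Φ : Matrix ι₁ ι₁ ℂ →ₗ[ℂ] Matrix κ₁ κ₁ ℂ)
    (Ψ : Matrix ι₂ ι₂ ℂ →ₗ[ℂ] Matrix κ₂ κ₂ ℂ) :
    Matrix (ι₁ × ι₂) (ι₁ × ι₂) ℂ →ₗ[ℂ] Matrix (κ₁ × κ₂) (κ₁ × κ₂) ℂ where
  toFun ρ := Matrix.of fun p q =>
    ∑ i, ∑ j, ∑ k, ∑ l, ρ (i, k) (j, l) *
      (Φ (Matrix.single i j 1) p.1 q.1 * Ψ (Matrix.single k l 1) p.2 q.2)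
  map_add' ρ σ := by
    ext p q
    simp [Matrix.add_apply, add_mul, Finset.sum_add_distrib]
  map_smul' c ρ := by
    ext p q
    simp [Matrix.smul_apply, smul_eq_mul, Finset.mul_sum, mul_assoc]

/-! Detection incoherence of `Φ` says that the diagonal of `Φ ρ` depends only on the diagonal
of `ρ`, i.e. `Φ (single i j 1)` has zero diagonal for `i ≠ j`. A diagonal entry of `(Φ ⊗ Θ) ρ`
weighs `ρ (i, k) (j, l)` by a diagonal entry of `Φ (single i j 1)` times one of
`Θ (single k l 1)`, and this weight vanishes unless `(i, k) = (j, l)`. -/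

section DetectionIncoherent

variable {ι κ : Type} [Fintype ι] [DecidableEq ι] [Fintype κ] [DecidableEq κ]

theorem deph_apply (ρ : Matrix ι ι ℂ) : deph ρ = diagonal fun i => ρ i i := rfl

theorem deph_single_of_ne {i j : ι} (hij : i ≠ j) : deph (single i j (1 : ℂ)) = 0 := by
  ext x y
  rw [deph_apply, diagonal_apply, Matrix.zero_apply]
  split_ifs with hxy
  · subst hxy
    exact single_apply_of_ne _ _ _ _ _ fun h => hij (h.1.trans h.2.symm)
  · rfl

theorem isDI_iff_diag {Φ : Matrix ι ι ℂ →ₗ[ℂ] Matrix κ κ ℂ} :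
    IsDI Φ ↔ ∀ ρ p, Φ ρ p p = Φ (deph ρ) p p := by
  simp only [IsDI, LinearMap.ext_iff, LinearMap.comp_apply, deph_apply, diagonal_eq_diagonal_iff]

theorem IsDI.apply_single_diag_of_ne {Φ : Matrix ι ι ℂ →ₗ[ℂ] Matrix κ κ ℂ} (hΦ : IsDI Φ)
    {i j : ι} (hij : i ≠ j) (p : κ) : Φ (single i j 1) p p = 0 := by
  rw [isDI_iff_diag.1 hΦ, deph_single_of_ne hij, map_zero, Matrix.zero_apply]

end DetectionIncoherent

section TensorProduct

variable {ι₁ ι₂ κ₁ κ₂ : Type} [Fintype ι₁] [DecidableEq ι₁] [Fintype ι₂] [DecidableEq ι₂]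
  [Fintype κ₁] [DecidableEq κ₁] [Fintype κ₂] [DecidableEq κ₂]
  {Φ : Matrix ι₁ ι₁ ℂ →ₗ[ℂ] Matrix κ₁ κ₁ ℂ} {Ψ : Matrix ι₂ ι₂ ℂ →ₗ[ℂ] Matrix κ₂ κ₂ ℂ}

theorem tensorLinMap_apply_apply (ρ : Matrix (ι₁ × ι₂) (ι₁ × ι₂) ℂ) (p q : κ₁ × κ₂) :
    tensorLinMap Φ Ψ ρ p q = ∑ i, ∑ j, ∑ k, ∑ l, ρ (i, k) (j, l) *
      (Φ (single i j 1) p.1 q.1 * Ψ (single k l 1) p.2 q.2) := rfl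

theorem IsDI.mul_apply_single_diag_of_ne (hΦ : IsDI Φ) (hΨ : IsDI Ψ) {i j : ι₁} {k l : ι₂}
    (hne : (i, k) ≠ (j, l)) (p : κ₁ × κ₂) :
    Φ (single i j 1) p.1 p.1 * Ψ (single k l 1) p.2 p.2 = 0 := by
  rw [Ne, Prod.mk.injEq, not_and_or] at hne
  rcases hne with hij | hkl
  · rw [hΦ.apply_single_diag_of_ne hij, zero_mul]
  · rw [hΨ.apply_single_diag_of_ne hkl, mul_zero]

theorem IsDI.tensorLinMap (hΦ : IsDI Φ) (hΨ : IsDI Ψ) : IsDI (tensorLinMap Φ Ψ) := by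
  refine isDI_iff_diag.2 fun ρ p => ?_
  simp only [tensorLinMap_apply_apply]
  refine Finset.sum_congr rfl fun i _ => Finset.sum_congr rfl fun j _ =>
    Finset.sum_congr rfl fun k _ => Finset.sum_congr rfl fun l _ => ?_
  by_cases hdiag : (i, k) = (j, l)
  · rw [deph_apply, hdiag, diagonal_apply_eq]
  · rw [hΦ.mul_apply_single_diag_of_ne hΨ hdiag, mul_zero, mul_zero]

end TensorProduct

theorem stmt3_general {a b c d : ℕ}
    (Φ : Matrix (Fin a) (Fin a) ℂ →ₗ[ℂ] Matrix (Fin b) (Fin b) ℂ)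
    (Θ : Matrix (Fin c) (Fin c) ℂ →ₗ[ℂ] Matrix (Fin d) (Fin d) ℂ)
    (hΦ : IsDI Φ) (hΘ : IsDI Θ) :
    IsDI (tensorLinMap Φ Θ) :=
  hΦ.tensorLinMap hΘ

theorem stmt3 {a b c d : ℕ}
    (Φ : Matrix (Fin a) (Fin a) ℂ →ₗ[ℂ] Matrix (Fin b) (Fin b) ℂ)
    (Θ : Matrix (Fin c) (Fin c) ℂ →ₗ[ℂ] Matrix (Fin d) (Fin d) ℂ)
    (hΦc : IsKrausChannel Φ) (hΘc : IsKrausChannel Θ)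
    (hΦ : IsDI Φ) (hΘ : IsDI Θ) :
    IsDI (tensorLinMap Φ Θ) :=
  stmt3_general Φ Θ hΦ hΘ
end

section
/- A completely positive trace-preserving map $\Phi$ with coefficients $\Phi^{b,d}_{a,c}$ defined by $\Phi(|b\rangle\langle d|)=\sum_{a,c}\Phi^{b,d}_{a,c}|a\rangle\langle c|$ is detection-incoherent ($\Delta\Phi=\Delta\Phi\Delta$) if and only if $\Phi^{b,d}_{a,a} = p(a|b)\,\delta_{b,d}$ for all $a,b,d$, where $p(a|b)=\Phi^{b,b}_{a,a}$ is a stochastic matrix (nonnegative with $\sum_a p(a|b)=1$). -/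
open Matrix
open scoped ComplexOrder

/-!
Dephasing only sees diagonal entries, so by linearity `Δ ∘ Φ = Δ ∘ Φ ∘ Δ` says exactly that
`Φ (|b⟩⟨d|)` has zero diagonal for `b ≠ d`. The numbers `p(a|b) = ⟨a|Φ (|b⟩⟨b|)|a⟩` are
nonnegative because a Kraus map preserves positive semidefiniteness, and sum to `1` over `a`
because it preserves the trace.
-/

section Dephasing

variable {ι : Type} [Fintype ι] [DecidableEq ι]

lemma deph_apply_s6 (ρ : Matrix ι ι ℂ) (i j : ι) : deph ρ i j = if i = j then ρ i i else 0 := by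
  simp [deph, diagonal_apply]

lemma deph_eq_deph_iff {ρ σ : Matrix ι ι ℂ} : deph ρ = deph σ ↔ ∀ i, ρ i i = σ i i := by
  refine ⟨fun h i => by simpa [deph_apply_s6] using congrFun (congrFun h i) i, fun h => ?_⟩
  ext i j
  simp only [deph_apply_s6, h]

lemma deph_single (b d : ι) :
    deph (single b d (1 : ℂ)) = if b = d then single b b 1 else 0 := by
  ext i j
  by_cases hbd : b = d <;> by_cases hij : i = j <;>
    simp [deph_apply_s6, single_apply, hbd, hij] <;> grind

end Dephasing

lemma isDI_iff_diag_single {ι κ : Type} [Fintype ι] [DecidableEq ι] [Fintype κ] [DecidableEq κ]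
    (Φ : Matrix ι ι ℂ →ₗ[ℂ] Matrix κ κ ℂ) :
    IsDI Φ ↔ ∀ a b d, Φ (single b d 1) a a = if b = d then Φ (single b b 1) a a else 0 := by
  have hsingle : ∀ b d, (deph (Φ (single b d 1)) = deph (Φ (deph (single b d 1))) ↔
      ∀ a, Φ (single b d 1) a a = if b = d then Φ (single b b 1) a a else 0) := by
    intro b d
    rw [deph_eq_deph_iff, deph_single]
    split_ifs <;> simp
  refine ⟨fun h a b d => (hsingle b d).1 (LinearMap.congr_fun h _) a, fun h => ?_⟩
  refine Matrix.ext_linearMap ℂ (fun b d => LinearMap.ext_ring ?_)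
  exact (hsingle b d).2 (fun a => h a b d)

namespace IsKrausChannel

variable {ι κ : Type} [Fintype ι] [DecidableEq ι] [Fintype κ] [DecidableEq κ]
  {Φ : Matrix ι ι ℂ →ₗ[ℂ] Matrix κ κ ℂ}

lemma trace_map (hΦ : IsKrausChannel Φ) (ρ : Matrix ι ι ℂ) : trace (Φ ρ) = trace ρ := by
  obtain ⟨N, K, hK, hK1⟩ := hΦ
  calc trace (Φ ρ) = trace ((∑ n, (K n)ᴴ * K n) * ρ) := by
        simp only [hK, trace_sum, Finset.sum_mul, trace_mul_cycle _ ρ]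
    _ = trace ρ := by rw [hK1, one_mul]

lemma posSemidef_map (hΦ : IsKrausChannel Φ) {ρ : Matrix ι ι ℂ} (hρ : ρ.PosSemidef) :
    (Φ ρ).PosSemidef := by
  obtain ⟨N, K, hK, -⟩ := hΦ
  rw [hK]
  exact posSemidef_sum _ fun n _ => hρ.mul_mul_conjTranspose_same (K n)

lemma exists_stochastic_diag (hΦ : IsKrausChannel Φ) :
    ∃ p : κ → ι → ℝ, (∀ a b, 0 ≤ p a b) ∧ (∀ b, ∑ a, p a b = 1) ∧
      ∀ a b, Φ (single b b 1) a a = p a b := by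
  have hnonneg (a : κ) (b : ι) : 0 ≤ Φ (single b b 1) a a := by
    refine (hΦ.posSemidef_map ?_).diag_nonneg
    rw [← diagonal_single]
    exact .diagonal (Pi.single_nonneg.2 zero_le_one)
  refine ⟨fun a b => (Φ (single b b 1) a a).re, fun a b => (Complex.nonneg_iff.1 (hnonneg a b)).1,
    fun b => ?_, fun a b => Complex.eq_re_of_ofReal_le (r := 0) (by exact_mod_cast hnonneg a b)⟩
  have htrace : trace (Φ (single b b 1)) = 1 := by rw [hΦ.trace_map, trace_single_eq_same]
  simpa [trace] using congrArg Complex.re htrace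

end IsKrausChannel

theorem stmt6 {n m : ℕ}
    (Φ : Matrix (Fin n) (Fin n) ℂ →ₗ[ℂ] Matrix (Fin m) (Fin m) ℂ)
    (hΦ : IsKrausChannel Φ) :
    IsDI Φ ↔
    ∃ p : Fin m → Fin n → ℝ, (∀ a b, 0 ≤ p a b) ∧ (∀ b, ∑ a, p a b = 1) ∧
      (∀ (a : Fin m) (b d : Fin n),
        Φ (Matrix.single b d 1) a a = if b = d then (p a b : ℂ) else 0) := by
  rw [isDI_iff_diag_single]
  constructor
  · intro h
    obtain ⟨p, hp0, hp1, hpΦ⟩ := hΦ.exists_stochastic_diag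
    exact ⟨p, hp0, hp1, fun a b d => by rw [h, hpΦ]⟩
  · rintro ⟨p, -, -, hp⟩ a b d
    rw [hp a b d, hp a b b, if_pos rfl]
end

section
/- Let $\|\cdot\|$ be a norm on linear maps between matrix spaces that is sub-multiplicative under composition, sub-multiplicative under tensor products, and satisfies $\|\Phi\|\leq 1$ for every detection-incoherent channel $\Phi$. Then the functional $M(\Theta)=\min_{\Phi\in\mathcal{DI}}\|\Delta\Theta-\Delta\Phi\|$ is monotone under right composition with detection-incoherent channels: $M(\Theta\circ\tilde\Phi)\leq M(\Theta)$ for all channels $\Theta$ and all $\tilde\Phi\in\mathcal{DI}$. -/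
open Matrix
open scoped ComplexOrder

/-!
Detection-incoherent channels are closed under composition, so every competitor `Φ` for `Θ`
yields the competitor `Φ ∘ Φ̃` for `Θ ∘ Φ̃`, and
`‖Δ(Θ ∘ Φ̃) - Δ(Φ ∘ Φ̃)‖ = ‖(ΔΘ - ΔΦ) ∘ Φ̃‖ ≤ ‖ΔΘ - ΔΦ‖ ‖Φ̃‖ ≤ ‖ΔΘ - ΔΦ‖`.
The competitor set for `Θ` must be nonempty, since `sInf ∅ = 0` in `ℝ`: the trace-and-prepare
channel `ρ ↦ tr ρ • |o⟩⟨o|` lies in it, and with no output states every map does.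
-/

namespace IsKrausChannel

variable {ι κ τ : Type} [Fintype ι] [DecidableEq ι] [Fintype κ] [DecidableEq κ]
  [Fintype τ] [DecidableEq τ]

theorem of_fintype {ν : Type} [Fintype ν] {Φ : Matrix ι ι ℂ →ₗ[ℂ] Matrix κ κ ℂ}
    (K : ν → Matrix κ ι ℂ) (hΦ : ∀ ρ, Φ ρ = ∑ n, K n * ρ * (K n)ᴴ)
    (hK : ∑ n, (K n)ᴴ * K n = 1) : IsKrausChannel Φ :=
  let e := Fintype.equivFin ν
  ⟨_, K ∘ e.symm, fun ρ => by rw [hΦ, ← e.symm.sum_comp]; rfl,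
    by rw [← hK, ← e.symm.sum_comp]; rfl⟩

theorem comp {S : Matrix κ κ ℂ →ₗ[ℂ] Matrix τ τ ℂ} {T : Matrix ι ι ℂ →ₗ[ℂ] Matrix κ κ ℂ}
    (hS : IsKrausChannel S) (hT : IsKrausChannel T) : IsKrausChannel (S.comp T) := by
  obtain ⟨M, L, hSL, hL⟩ := hS
  obtain ⟨N, K, hTK, hK⟩ := hT
  refine of_fintype (fun p : Fin M × Fin N => L p.1 * K p.2) (fun ρ => ?_) ?_
  · simp [hSL, hTK, Fintype.sum_prod_type, Matrix.mul_sum, Matrix.sum_mul,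
      Matrix.conjTranspose_mul, Matrix.mul_assoc]
  · calc ∑ p : Fin M × Fin N, (L p.1 * K p.2)ᴴ * (L p.1 * K p.2)
        = ∑ n, (K n)ᴴ * (∑ m, (L m)ᴴ * L m) * K n := by
          simp only [Fintype.sum_prod_type, Matrix.mul_sum, Matrix.sum_mul,
            Matrix.conjTranspose_mul, Matrix.mul_assoc]
          exact Finset.sum_comm
      _ = 1 := by simp [hL, hK]

end IsKrausChannel

theorem IsDI.comp {ι κ τ : Type} [Fintype ι] [DecidableEq ι] [Fintype κ] [DecidableEq κ]
    [Fintype τ] [DecidableEq τ]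
    {S : Matrix κ κ ℂ →ₗ[ℂ] Matrix τ τ ℂ} {T : Matrix ι ι ℂ →ₗ[ℂ] Matrix κ κ ℂ}
    (hS : IsDI S) (hT : IsDI T) : IsDI (S.comp T) := by
  ext1 ρ
  have hS' (σ) : deph (S σ) = deph (S (deph σ)) := LinearMap.congr_fun hS σ
  have hT' : deph (T ρ) = deph (T (deph ρ)) := LinearMap.congr_fun hT ρ
  simp only [LinearMap.comp_apply]
  rw [hS', hT', ← hS']

section TraceAndPrepare

variable {ι κ : Type} [Fintype ι] [DecidableEq ι] [Fintype κ] [DecidableEq κ]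

noncomputable def traceAndPrepare (o : κ) : Matrix ι ι ℂ →ₗ[ℂ] Matrix κ κ ℂ :=
  (Matrix.traceLinearMap ι ℂ ℂ).smulRight (single o o 1)

theorem isKrausChannel_traceAndPrepare (o : κ) :
    IsKrausChannel (traceAndPrepare o : Matrix ι ι ℂ →ₗ[ℂ] Matrix κ κ ℂ) := by
  refine IsKrausChannel.of_fintype (fun i : ι => single o i 1) (fun ρ => ?_) ?_
  · simp [traceAndPrepare, Matrix.trace, Finset.sum_smul, Matrix.smul_single]
  · simp [Matrix.sum_single_one]

theorem isDI_traceAndPrepare (o : κ) :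
    IsDI (traceAndPrepare o : Matrix ι ι ℂ →ₗ[ℂ] Matrix κ κ ℂ) := by
  ext1 ρ
  simp [traceAndPrepare, deph, Matrix.trace]

end TraceAndPrepare

theorem IsKrausChannel.exists_isDI {ι κ : Type} [Fintype ι] [DecidableEq ι] [Fintype κ]
    [DecidableEq κ] {Θ : Matrix ι ι ℂ →ₗ[ℂ] Matrix κ κ ℂ} (hΘ : IsKrausChannel Θ) :
    ∃ Φ : Matrix ι ι ℂ →ₗ[ℂ] Matrix κ κ ℂ, IsKrausChannel Φ ∧ IsDI Φ := by
  cases isEmpty_or_nonempty κ with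
  | inl _ => exact ⟨Θ, hΘ, Subsingleton.elim _ _⟩
  | inr h => exact ⟨_, isKrausChannel_traceAndPrepare h.some, isDI_traceAndPrepare _⟩

theorem stmt8_general
    (nn : ∀ (ι κ : Type) [Fintype ι] [DecidableEq ι] [Fintype κ] [DecidableEq κ],
      (Matrix ι ι ℂ →ₗ[ℂ] Matrix κ κ ℂ) → ℝ)
    (hnonneg : ∀ (ι κ : Type) [Fintype ι] [DecidableEq ι] [Fintype κ] [DecidableEq κ]
      (T : Matrix ι ι ℂ →ₗ[ℂ] Matrix κ κ ℂ), 0 ≤ nn ι κ T)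
    (hcomp : ∀ (ι κ τ : Type) [Fintype ι] [DecidableEq ι] [Fintype κ] [DecidableEq κ]
      [Fintype τ] [DecidableEq τ]
      (S : Matrix κ κ ℂ →ₗ[ℂ] Matrix τ τ ℂ) (T : Matrix ι ι ℂ →ₗ[ℂ] Matrix κ κ ℂ),
      nn ι τ (LinearMap.comp S T) ≤ nn κ τ S * nn ι κ T)
    (hDIbound : ∀ (ι κ : Type) [Fintype ι] [DecidableEq ι] [Fintype κ] [DecidableEq κ]
      (Φ : Matrix ι ι ℂ →ₗ[ℂ] Matrix κ κ ℂ), IsKrausChannel Φ → IsDI Φ → nn ι κ Φ ≤ 1)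
    {a b c : ℕ}
    (Θ : Matrix (Fin b) (Fin b) ℂ →ₗ[ℂ] Matrix (Fin c) (Fin c) ℂ)
    (hΘ : IsKrausChannel Θ)
    (Φt : Matrix (Fin a) (Fin a) ℂ →ₗ[ℂ] Matrix (Fin b) (Fin b) ℂ)
    (hΦt : IsKrausChannel Φt) (hΦtDI : IsDI Φt) :
    sInf {r : ℝ | ∃ Φ : Matrix (Fin a) (Fin a) ℂ →ₗ[ℂ] Matrix (Fin c) (Fin c) ℂ,
        IsKrausChannel Φ ∧ IsDI Φ ∧
        r = nn (Fin a) (Fin c)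
          (LinearMap.comp deph (LinearMap.comp Θ Φt) - LinearMap.comp deph Φ)} ≤
    sInf {r : ℝ | ∃ Φ : Matrix (Fin b) (Fin b) ℂ →ₗ[ℂ] Matrix (Fin c) (Fin c) ℂ,
        IsKrausChannel Φ ∧ IsDI Φ ∧
        r = nn (Fin b) (Fin c) (LinearMap.comp deph Θ - LinearMap.comp deph Φ)} := by
  obtain ⟨Φ₀, hΦ₀K, hΦ₀DI⟩ := hΘ.exists_isDI
  refine le_csInf ⟨_, Φ₀, hΦ₀K, hΦ₀DI, rfl⟩ ?_
  rintro _ ⟨Φ, hΦK, hΦDI, rfl⟩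
  set D := LinearMap.comp deph Θ - LinearMap.comp deph Φ
  calc _ ≤ nn (Fin a) (Fin c) (D.comp Φt) := by
        refine csInf_le ⟨0, ?_⟩
          ⟨Φ.comp Φt, hΦK.comp hΦt, hΦDI.comp hΦtDI, by rw [LinearMap.sub_comp]; rfl⟩
        rintro _ ⟨_, _, _, rfl⟩
        exact hnonneg _ _ _
    _ ≤ nn (Fin b) (Fin c) D * nn (Fin a) (Fin b) Φt := hcomp _ _ _ _ _
    _ ≤ nn (Fin b) (Fin c) D :=
        mul_le_of_le_one_right (hnonneg _ _ _) (hDIbound _ _ _ hΦt hΦtDI)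

theorem stmt8
    (nn : ∀ (ι κ : Type) [Fintype ι] [DecidableEq ι] [Fintype κ] [DecidableEq κ],
      (Matrix ι ι ℂ →ₗ[ℂ] Matrix κ κ ℂ) → ℝ)
    (hnonneg : ∀ (ι κ : Type) [Fintype ι] [DecidableEq ι] [Fintype κ] [DecidableEq κ]
      (T : Matrix ι ι ℂ →ₗ[ℂ] Matrix κ κ ℂ), 0 ≤ nn ι κ T)
    (hdefinite : ∀ (ι κ : Type) [Fintype ι] [DecidableEq ι] [Fintype κ] [DecidableEq κ]
      (T : Matrix ι ι ℂ →ₗ[ℂ] Matrix κ κ ℂ), nn ι κ T = 0 ↔ T = 0)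
    (htriangle : ∀ (ι κ : Type) [Fintype ι] [DecidableEq ι] [Fintype κ] [DecidableEq κ]
      (S T : Matrix ι ι ℂ →ₗ[ℂ] Matrix κ κ ℂ), nn ι κ (S + T) ≤ nn ι κ S + nn ι κ T)
    (hhom : ∀ (ι κ : Type) [Fintype ι] [DecidableEq ι] [Fintype κ] [DecidableEq κ]
      (c : ℂ) (T : Matrix ι ι ℂ →ₗ[ℂ] Matrix κ κ ℂ), nn ι κ (c • T) = ‖c‖ * nn ι κ T)
    (hcomp : ∀ (ι κ τ : Type) [Fintype ι] [DecidableEq ι] [Fintype κ] [DecidableEq κ]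
      [Fintype τ] [DecidableEq τ]
      (S : Matrix κ κ ℂ →ₗ[ℂ] Matrix τ τ ℂ) (T : Matrix ι ι ℂ →ₗ[ℂ] Matrix κ κ ℂ),
      nn ι τ (LinearMap.comp S T) ≤ nn κ τ S * nn ι κ T)
    (htens : ∀ (ι₁ ι₂ κ₁ κ₂ : Type)
      [Fintype ι₁] [DecidableEq ι₁] [Fintype ι₂] [DecidableEq ι₂]
      [Fintype κ₁] [DecidableEq κ₁] [Fintype κ₂] [DecidableEq κ₂]
      (S : Matrix ι₁ ι₁ ℂ →ₗ[ℂ] Matrix κ₁ κ₁ ℂ) (T : Matrix ι₂ ι₂ ℂ →ₗ[ℂ] Matrix κ₂ κ₂ ℂ),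
      nn (ι₁ × ι₂) (κ₁ × κ₂) (tensorLinMap S T) ≤ nn ι₁ κ₁ S * nn ι₂ κ₂ T)
    (hDIbound : ∀ (ι κ : Type) [Fintype ι] [DecidableEq ι] [Fintype κ] [DecidableEq κ]
      (Φ : Matrix ι ι ℂ →ₗ[ℂ] Matrix κ κ ℂ), IsKrausChannel Φ → IsDI Φ → nn ι κ Φ ≤ 1)
    {a b c : ℕ}
    (Θ : Matrix (Fin b) (Fin b) ℂ →ₗ[ℂ] Matrix (Fin c) (Fin c) ℂ)
    (hΘ : IsKrausChannel Θ)
    (Φt : Matrix (Fin a) (Fin a) ℂ →ₗ[ℂ] Matrix (Fin b) (Fin b) ℂ)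
    (hΦt : IsKrausChannel Φt) (hΦtDI : IsDI Φt) :
    sInf {r : ℝ | ∃ Φ : Matrix (Fin a) (Fin a) ℂ →ₗ[ℂ] Matrix (Fin c) (Fin c) ℂ,
        IsKrausChannel Φ ∧ IsDI Φ ∧
        r = nn (Fin a) (Fin c)
          (LinearMap.comp deph (LinearMap.comp Θ Φt) - LinearMap.comp deph Φ)} ≤
    sInf {r : ℝ | ∃ Φ : Matrix (Fin b) (Fin b) ℂ →ₗ[ℂ] Matrix (Fin c) (Fin c) ℂ,
        IsKrausChannel Φ ∧ IsDI Φ ∧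
        r = nn (Fin b) (Fin c) (LinearMap.comp deph Θ - LinearMap.comp deph Φ)} :=
  stmt8_general nn hnonneg hcomp hDIbound Θ hΘ Φt hΦt hΦtDI
end
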